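/- arXiv:2101.02517 — 6 statements merged into one kernel-verified Lean document; each statement's English description precedes it below -/
import Mathlib

section
/- For any probability measure η on ℝ, the pushforward of the product measure η ⊗ λ (λ the Lebesgue measure on (0,1)) under the map (z,w) ↦ F_η(z-) + w·η({z}) is the Lebesgue measure λ on (0,1). -/
open MeasureTheory Set Filter Topology ProbabilityTheory Function

/-!
Writing `f` for the distribution function of `η`, the map is the distributional transform
`(z, w) ↦ f(z-) + w (f z - f(z-))`, and the statement holds for any Stieltjes function `f` with
limits `0` and `1` and its measure. For `0 < t < 1` let `x` be the least point with `t ≤ f x`.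
On `ℝ × (0,1)` the transform is `< t` exactly on `(-∞, x) × (0,1)` and on `{x} × (0, r)`, where
`r` is the fraction of the jump of `f` at `x` lying below `t`; this set has mass
`f(x-) + r (f x - f(x-)) = t`. A probability measure with these values on the rays `(-∞, t)` is
the uniform distribution on `(0,1)`.
-/

noncomputable def distributionalTransform (f : ℝ → ℝ) (z w : ℝ) : ℝ :=
  leftLim f z + w * (f z - leftLim f z)

namespace Monotone

variable {f : ℝ → ℝ}

theorem leftLim_le_distributionalTransform (hf : Monotone f) (z : ℝ) {w : ℝ} (hw : 0 ≤ w) :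
    leftLim f z ≤ distributionalTransform f z w :=
  le_add_of_nonneg_right (mul_nonneg hw (sub_nonneg.2 (hf.leftLim_le le_rfl)))

theorem distributionalTransform_le (hf : Monotone f) (z : ℝ) {w : ℝ} (hw : w ≤ 1) :
    distributionalTransform f z w ≤ f z := by
  have hjump : 0 ≤ f z - leftLim f z := sub_nonneg.2 (hf.leftLim_le le_rfl)
  unfold distributionalTransform
  nlinarith

theorem measurable_distributionalTransform (hf : Monotone f) :
    Measurable fun p : ℝ × ℝ => distributionalTransform f p.1 p.2 := by
  have := hf.measurable
  have := hf.leftLim.measurable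
  unfold distributionalTransform
  fun_prop

/-- If `f` is continuous at `x`, the second piece is `{x} ×ˢ Ioo 0 (_ / 0) = ∅`. -/
theorem distributionalTransform_lt_inter_eq (hf : Monotone f) {t x : ℝ}
    (hx : IsLeast {z | t ≤ f z} x) :
    {p : ℝ × ℝ | distributionalTransform f p.1 p.2 < t} ∩ univ ×ˢ Ioo 0 1 =
      Iio x ×ˢ Ioo 0 1 ∪ {x} ×ˢ Ioo 0 ((t - leftLim f x) / (f x - leftLim f x)) := by
  ext ⟨z, w⟩
  simp only [mem_inter_iff, mem_ofPred_eq, mem_prod, mem_univ, true_and, mem_Ioo, mem_Iio,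
    mem_singleton_iff, mem_union]
  rcases lt_trichotomy z x with hz | rfl | hz
  · have hfz : f z < t := lt_of_not_ge fun h => hz.not_ge (hx.2 h)
    constructor
    · rintro ⟨-, hw⟩
      exact Or.inl ⟨hz, hw⟩
    · rintro (⟨-, hw⟩ | ⟨rfl, -⟩)
      · exact ⟨(hf.distributionalTransform_le z hw.2.le).trans_lt hfz, hw⟩
      · exact absurd hz (lt_irrefl z)
  · have hjump : 0 ≤ f z - leftLim f z := sub_nonneg.2 (hf.leftLim_le le_rfl)
    simp only [lt_irrefl, false_and, true_and, false_or]
    unfold distributionalTransform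
    rcases hjump.eq_or_lt with hzero | hpos
    · have hleft : leftLim f z = f z := by linarith
      have ht : t ≤ f z := hx.1
      rw [hleft, sub_self, div_zero, mul_zero, add_zero]
      constructor
      · rintro ⟨h, -⟩; exact absurd h (not_lt.2 ht)
      · rintro ⟨h0, h⟩; exact absurd (h0.trans h) (lt_irrefl 0)
    · rw [lt_div_iff₀ hpos]
      have ht : t ≤ f z := hx.1
      constructor
      · rintro ⟨h, h0, -⟩; exact ⟨h0, by linarith⟩
      · rintro ⟨h0, h⟩
        refine ⟨by linarith, h0, ?_⟩
        nlinarith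
  · have hfz : t ≤ leftLim f z := hx.1.trans (hf.le_leftLim hz)
    simp only [hz.not_gt, hz.ne', false_and, or_self, iff_false, not_and]
    intro h hw _
    exact (hfz.trans (hf.leftLim_le_distributionalTransform z hw.le)).not_gt h

end Monotone

instance : IsProbabilityMeasure (volume.restrict (Ioo (0 : ℝ) 1)) := ⟨by simp⟩

theorem eq_volume_restrict_Ioo_of_measure_Iio (ν : Measure ℝ) [IsProbabilityMeasure ν]
    (h : ∀ t ∈ Ioo 0 1, ν (Iio t) = ENNReal.ofReal t) :
    ν = volume.restrict (Ioo 0 1) := by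
  have hIio : ∀ t, ν (Iio t) = ENNReal.ofReal (min t 1) := by
    intro t
    rcases le_or_gt t 0 with ht0 | ht0
    · rw [ENNReal.ofReal_of_nonpos (min_le_of_left_le ht0)]
      have hlim : Tendsto ENNReal.ofReal (𝓝[>] 0) (𝓝 0) :=
        ENNReal.continuous_ofReal.tendsto' 0 0 ENNReal.ofReal_zero |>.mono_left nhdsWithin_le_nhds
      refine le_antisymm (ge_of_tendsto hlim ?_) zero_le
      filter_upwards [Ioo_mem_nhdsGT one_pos] with s hs
      exact (h s hs ▸ measure_mono (Iio_subset_Iio (ht0.trans hs.1.le)))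
    rcases lt_or_ge t 1 with ht1 | ht1
    · rw [min_eq_left ht1.le, h t ⟨ht0, ht1⟩]
    · rw [min_eq_right ht1, ENNReal.ofReal_one]
      have hlim : Tendsto ENNReal.ofReal (𝓝[<] 1) (𝓝 1) :=
        ENNReal.continuous_ofReal.tendsto' 1 1 ENNReal.ofReal_one |>.mono_left nhdsWithin_le_nhds
      refine le_antisymm prob_le_one (le_of_tendsto hlim ?_)
      filter_upwards [Ioo_mem_nhdsLT one_pos] with s hs
      exact (h s hs ▸ measure_mono (Iio_subset_Iio (hs.2.le.trans ht1)))
  refine Measure.ext_of_Ici _ _ fun t => ?_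
  rw [← compl_Iio, prob_compl_eq_one_sub measurableSet_Iio,
    prob_compl_eq_one_sub measurableSet_Iio, hIio, Measure.restrict_apply measurableSet_Iio,
    Iio_inter_Ioo, Real.volume_Ioo, sub_zero]

namespace StieltjesFunction

variable (f : StieltjesFunction ℝ)

theorem exists_isLeast_le {t : ℝ} (hlow : ∃ z, f z < t) (hhigh : ∃ z, t ≤ f z) :
    ∃ x, IsLeast {z | t ≤ f z} x := by
  obtain ⟨z₀, hz₀⟩ := hlow
  have hbdd : BddBelow {z | t ≤ f z} :=
    ⟨z₀, fun y hy => le_of_not_gt fun h => hz₀.not_ge (hy.trans (f.mono h.le))⟩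
  refine ⟨sInf {z | t ≤ f z}, ?_, fun y hy => csInf_le hbdd hy⟩
  refine ge_of_tendsto ((f.right_continuous _).mono Ioi_subset_Ici_self) ?_
  filter_upwards [self_mem_nhdsWithin] with y hy
  obtain ⟨s, hs, hsy⟩ := exists_lt_of_csInf_lt hhigh hy
  exact (show t ≤ f s from hs).trans (f.mono hsy.le)

theorem measure_prod_distributionalTransform_lt (hbot : Tendsto f atBot (𝓝 0))
    (htop : Tendsto f atTop (𝓝 1)) {t : ℝ} (ht : t ∈ Ioo 0 1) :
    (f.measure.prod (volume.restrict (Ioo (0 : ℝ) 1)))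
      {p | distributionalTransform f p.1 p.2 < t} = ENNReal.ofReal t := by
  obtain ⟨x, hx⟩ := f.exists_isLeast_le (hbot.eventually_lt_const ht.1).exists
    (htop.eventually_const_le ht.2).exists
  set a := leftLim f x
  set r := (t - a) / (f x - a)
  have hlt : ∀ z < x, f z < t := fun z hz => lt_of_not_ge fun h => hz.not_ge (hx.2 h)
  have ha : 0 ≤ a :=
    (f.mono.le_of_tendsto hbot (x - 1)).trans (f.mono.le_leftLim (sub_one_lt x))
  have hat : a ≤ t :=
    le_of_tendsto (f.mono.tendsto_leftLim x)
      (eventually_nhdsWithin_of_forall fun z hz => (hlt z hz).le)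
  have hjump : 0 ≤ f x - a := sub_nonneg.2 (f.mono.leftLim_le le_rfl)
  have hr : (f x - a) * r = t - a := by
    rcases eq_or_ne (f x - a) 0 with h | h
    · have htx : t ≤ f x := hx.1
      rw [h, zero_mul]
      linarith
    · exact mul_div_cancel₀ _ h
  have hprod : f.measure.prod (volume.restrict (Ioo (0 : ℝ) 1)) =
      (f.measure.prod volume).restrict (univ ×ˢ Ioo (0 : ℝ) 1) := by
    rw [← Measure.prod_restrict, Measure.restrict_univ]
  have hdisj : Disjoint (Iio x ×ˢ Ioo (0 : ℝ) 1) ({x} ×ˢ Ioo 0 r) :=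
    disjoint_prod.2 (Or.inl (disjoint_singleton_right.2 (lt_irrefl x)))
  rw [hprod, Measure.restrict_apply' (MeasurableSet.univ.prod measurableSet_Ioo),
    f.mono.distributionalTransform_lt_inter_eq hx,
    measure_union hdisj ((measurableSet_singleton x).prod measurableSet_Ioo),
    Measure.prod_prod, Measure.prod_prod, f.measure_Iio hbot, f.measure_singleton,
    Real.volume_Ioo, Real.volume_Ioo, sub_zero, sub_zero, sub_zero, ENNReal.ofReal_one, mul_one,
    ← ENNReal.ofReal_mul hjump, ← ENNReal.ofReal_add ha (by linarith), hr, add_sub_cancel]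

theorem map_prod_distributionalTransform (hbot : Tendsto f atBot (𝓝 0))
    (htop : Tendsto f atTop (𝓝 1)) :
    (f.measure.prod (volume.restrict (Ioo (0 : ℝ) 1))).map
      (fun p => distributionalTransform f p.1 p.2) = volume.restrict (Ioo (0 : ℝ) 1) := by
  have := f.isProbabilityMeasure hbot htop
  have := Measure.isProbabilityMeasure_map (μ := f.measure.prod (volume.restrict (Ioo (0 : ℝ) 1)))
    f.mono.measurable_distributionalTransform.aemeasurable
  refine eq_volume_restrict_Ioo_of_measure_Iio _ fun t ht => ?_
  rw [Measure.map_apply f.mono.measurable_distributionalTransform measurableSet_Iio]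
  exact f.measure_prod_distributionalTransform_lt hbot htop ht

end StieltjesFunction

namespace ProbabilityTheory

variable (η : Measure ℝ) [IsProbabilityMeasure η]

theorem toReal_measure_Iio_eq_leftLim_cdf (z : ℝ) :
    (η (Iio z)).toReal = leftLim (cdf η) z := by
  have h := (cdf η).measure_Iio (tendsto_cdf_atBot η) z
  rw [measure_cdf, sub_zero] at h
  rw [h, ENNReal.toReal_ofReal
    ((cdf_nonneg η (z - 1)).trans ((monotone_cdf η).le_leftLim (sub_one_lt z)))]

theorem toReal_measure_singleton_eq_cdf_sub_leftLim (z : ℝ) :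
    (η {z}).toReal = cdf η z - leftLim (cdf η) z := by
  have h := (cdf η).measure_singleton z
  rw [measure_cdf] at h
  rw [h, ENNReal.toReal_ofReal (sub_nonneg.2 ((monotone_cdf η).leftLim_le le_rfl))]

end ProbabilityTheory

/-- Inverse transform sampling identity: the pushforward of `η ⊗ λ` (with `λ` the uniform
distribution on `(0,1)`) under `(z,w) ↦ F_η(z-) + w·η({z})` is `λ`. -/
theorem stmt3 (η : Measure ℝ) [IsProbabilityMeasure η] :
    (η.prod (volume.restrict (Set.Ioo (0 : ℝ) 1))).map
      (fun p : ℝ × ℝ => (η (Set.Iio p.1)).toReal + p.2 * (η {p.1}).toReal)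
    = volume.restrict (Set.Ioo (0 : ℝ) 1) := by
  have hF : (fun p : ℝ × ℝ => (η (Iio p.1)).toReal + p.2 * (η {p.1}).toReal) =
      fun p => distributionalTransform (cdf η) p.1 p.2 := by
    ext p
    rw [toReal_measure_Iio_eq_leftLim_cdf, toReal_measure_singleton_eq_cdf_sub_leftLim]
    rfl
  have h := (cdf η).map_prod_distributionalTransform (tendsto_cdf_atBot η) (tendsto_cdf_atTop η)
  rwa [measure_cdf, ← hF] at h
end

section
/- Let r ≥ 1 and μ be a probability measure on a Polish space X with finite r-th moment. Let μ̄ be the pushforward of μ under x ↦ d(x,x₀)^r. Then for every ε ∈ (0,1), I^r_ε(μ) = ∫_{1-ε}^{1} F_{μ̄}^{-1}(u) du, where I^r_ε(μ) = sup{ ∫ d(x,x₀)^r dτ : τ ≤ μ, τ(X) ≤ ε }. -/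
/-! Let `η` be the law of `f = d(·, x₀)^r` under `μ` and `q = F_η⁻¹(1 - ε)`; both sides equal
`∫ (f - q)⁺ dμ + q ε`. For the quantile integral this follows from the fact that `F_η⁻¹` pushes
Lebesgue measure on `(0, 1)` forward to `η`, which also gives `μ {f > q} ≤ ε ≤ μ {f ≥ q}`.
For `I_ε` it is the bathtub principle: `f ≤ (f - q)⁺ + q` bounds `∫ f dτ` for every admissible `τ`,
and `τ = μ|_{f > q} + θ μ|_{f = q}`, with `θ` chosen so that `τ(X) = ε`, attains the bound. -/

open MeasureTheory

/-- `I^r_ε(μ) = sup { ∫ d(x,x₀)^r dτ : τ ≤ μ, τ(X) ≤ ε }`. -/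
noncomputable def Ieps {X : Type*} [MetricSpace X] [MeasurableSpace X]
    (r : ℝ) (x₀ : X) (μ : Measure X) (ε : ℝ) : ℝ :=
  sSup {c : ℝ | ∃ τ : Measure X, τ ≤ μ ∧ τ Set.univ ≤ ENNReal.ofReal ε ∧
    c = ∫ x, dist x x₀ ^ r ∂τ}

/-- The cumulative distribution function of a measure on ℝ. -/
noncomputable def cdf' (η : Measure ℝ) (x : ℝ) : ℝ := (η (Set.Iic x)).toReal

/-- The quantile function `F_η⁻¹(u) = inf {x | F_η(x) ≥ u}`. -/
noncomputable def quantile' (η : Measure ℝ) (u : ℝ) : ℝ := sInf {x : ℝ | u ≤ cdf' η x}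

open Set Filter ProbabilityTheory
open scoped Topology ENNReal

section Quantile

variable {η : Measure ℝ} {u x : ℝ}

lemma nonempty_setOf_le_cdf (hu : u < 1) : {x | u ≤ cdf η x}.Nonempty :=
  ((tendsto_cdf_atTop η).eventually (eventually_ge_nhds hu)).exists

lemma bddBelow_setOf_le_cdf (hu : 0 < u) : BddBelow {x | u ≤ cdf η x} := by
  obtain ⟨b, hb⟩ := eventually_atBot.1 ((tendsto_cdf_atBot η).eventually (eventually_lt_nhds hu))
  refine ⟨b, fun x hx => le_of_not_gt fun hxb => ?_⟩
  exact (hb x hxb.le).not_ge hx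

variable [IsProbabilityMeasure η]

lemma quantile'_eq_sInf (u : ℝ) : quantile' η u = sInf {x | u ≤ cdf η x} := by
  simp only [quantile', cdf', ← measureReal_def, cdf_eq_real]

lemma le_cdf_quantile' (hu0 : 0 < u) (hu1 : u < 1) : u ≤ cdf η (quantile' η u) := by
  rw [quantile'_eq_sInf]
  set m := sInf {x | u ≤ cdf η x}
  have hright : ∀ z, m < z → u ≤ cdf η z := fun z hz => by
    obtain ⟨y, hy, hyz⟩ :=
      (csInf_lt_iff (bddBelow_setOf_le_cdf hu0) (nonempty_setOf_le_cdf hu1)).1 hz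
    exact hy.trans (monotone_cdf η hyz.le)
  have hcont : Tendsto (cdf η) (𝓝[>] m) (𝓝 (cdf η m)) :=
    ((cdf η).right_continuous m).mono Ioi_subset_Ici_self
  exact ge_of_tendsto hcont (eventually_nhdsWithin_of_forall hright)

lemma quantile'_le_iff (hu0 : 0 < u) (hu1 : u < 1) : quantile' η u ≤ x ↔ u ≤ cdf η x := by
  refine ⟨fun h => (le_cdf_quantile' hu0 hu1).trans (monotone_cdf η h), fun h => ?_⟩
  rw [quantile'_eq_sInf]
  exact csInf_le (bddBelow_setOf_le_cdf hu0) h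

lemma monotoneOn_quantile' : MonotoneOn (quantile' η) (Ioo 0 1) := fun u hu v hv huv => by
  simp only [quantile'_eq_sInf]
  exact csInf_le_csInf (bddBelow_setOf_le_cdf hu.1) (nonempty_setOf_le_cdf hv.2)
    fun x hx => huv.trans hx

lemma aemeasurable_quantile' : AEMeasurable (quantile' η) (volume.restrict (Ioo 0 1)) :=
  aemeasurable_restrict_of_monotoneOn measurableSet_Ioo monotoneOn_quantile'

lemma map_quantile' : (volume.restrict (Ioo 0 1)).map (quantile' η) = η := by
  refine Measure.ext_of_Iic _ _ fun x => ?_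
  rw [Measure.map_apply_of_aemeasurable aemeasurable_quantile' measurableSet_Iic,
    Measure.restrict_apply' measurableSet_Ioo, ← ofReal_cdf]
  have hpre : quantile' η ⁻¹' Iic x ∩ Ioo 0 1 = Iic (cdf η x) ∩ Ioo 0 1 := by
    ext v
    simp only [mem_inter_iff, mem_preimage, mem_Iic, and_congr_left_iff]
    exact fun hv => quantile'_le_iff hv.1 hv.2
  rw [hpre]
  refine le_antisymm ?_ ?_
  · calc volume (Iic (cdf η x) ∩ Ioo 0 1) ≤ volume (Ioc 0 (cdf η x)) :=
          measure_mono fun v hv => ⟨hv.2.1, hv.1⟩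
      _ = ENNReal.ofReal (cdf η x) := by rw [Real.volume_Ioc, sub_zero]
  · calc ENNReal.ofReal (cdf η x) = volume (Ioo 0 (cdf η x)) := by rw [Real.volume_Ioo, sub_zero]
      _ ≤ volume (Iic (cdf η x) ∩ Ioo 0 1) :=
          measure_mono fun v hv => ⟨hv.2.le, hv.1, hv.2.trans_le (cdf_le_one η x)⟩

lemma measure_eq_volume_preimage_quantile' {s : Set ℝ} (hs : MeasurableSet s) :
    η s = volume (quantile' η ⁻¹' s ∩ Ioo 0 1) := by
  conv_lhs => rw [← map_quantile' (η := η)]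
  rw [Measure.map_apply_of_aemeasurable aemeasurable_quantile' hs,
    Measure.restrict_apply' measurableSet_Ioo]

lemma measure_Ioi_quantile'_le (hu0 : 0 < u) (hu1 : u < 1) :
    η (Ioi (quantile' η u)) ≤ ENNReal.ofReal (1 - u) := by
  rw [measure_eq_volume_preimage_quantile' measurableSet_Ioi, ← Real.volume_Ioo]
  refine measure_mono fun v ⟨hv, hv01⟩ => ⟨lt_of_not_ge fun hvu => ?_, hv01.2⟩
  exact (monotoneOn_quantile' hv01 ⟨hu0, hu1⟩ hvu).not_gt hv

lemma le_measure_Ici_quantile' (hu0 : 0 < u) :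
    ENNReal.ofReal (1 - u) ≤ η (Ici (quantile' η u)) := by
  rw [measure_eq_volume_preimage_quantile' measurableSet_Ici, ← Real.volume_Ioo]
  refine measure_mono fun v hv => ⟨?_, hu0.trans hv.1, hv.2⟩
  exact monotoneOn_quantile' ⟨hu0, hv.1.trans hv.2⟩ ⟨hu0.trans hv.1, hv.2⟩ hv.1.le

lemma quantile'_nonneg (hη : η (Iio 0) = 0) (hu : 0 < u) : 0 ≤ quantile' η u := by
  rw [quantile'_eq_sInf]
  refine Real.sInf_nonneg fun x hx => le_of_not_gt fun hx0 => hu.not_ge ?_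
  have : η (Iic x) = 0 := measure_mono_null (Iic_subset_Iio.2 hx0) hη
  simpa [cdf_eq_real, measureReal_def, this] using hx

lemma integral_comp_quantile' {g : ℝ → ℝ} (hg : AEStronglyMeasurable g η) :
    ∫ x, g x ∂η = ∫ v in Ioo 0 1, g (quantile' η v) := by
  rw [← map_quantile' (η := η)] at hg
  conv_lhs => rw [← map_quantile' (η := η)]
  exact integral_map aemeasurable_quantile' hg

lemma integrableOn_quantile' (hη : Integrable id η) : IntegrableOn (quantile' η) (Ioo 0 1) := by
  rw [← map_quantile' (η := η)] at hη
  exact (integrable_map_measure aestronglyMeasurable_id aemeasurable_quantile').1 hη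

lemma setIntegral_Ioo_quantile' (hη : Integrable id η) (hu0 : 0 < u) (hu1 : u < 1) :
    ∫ v in Ioo u 1, quantile' η v
      = ∫ x, max (x - quantile' η u) 0 ∂η + quantile' η u * (1 - u) := by
  set q := quantile' η u
  have hsub : Ioo u 1 ⊆ Ioo 0 1 := Ioo_subset_Ioo_left hu0.le
  have hpos : ∀ v ∈ Ioo (0 : ℝ) 1,
      max (quantile' η v - q) 0 = (Ioo u 1).indicator (fun v => quantile' η v - q) v := by
    intro v hv
    rcases le_or_gt v u with hvu | huv
    · rw [indicator_of_notMem fun h => h.1.not_ge hvu, max_eq_right]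
      exact sub_nonpos.2 (monotoneOn_quantile' hv ⟨hu0, hu1⟩ hvu)
    · rw [indicator_of_mem (show v ∈ Ioo u 1 from ⟨huv, hv.2⟩), max_eq_left]
      exact sub_nonneg.2 (monotoneOn_quantile' ⟨hu0, hu1⟩ hv huv.le)
  rw [integral_comp_quantile'
      ((continuous_sub_right q).max continuous_const).aestronglyMeasurable,
    setIntegral_congr_fun measurableSet_Ioo hpos, integral_indicator measurableSet_Ioo,
    Measure.restrict_restrict measurableSet_Ioo, inter_eq_self_of_subset_left hsub,
    integral_sub ((integrableOn_quantile' hη).mono_set hsub) (integrable_const q),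
    setIntegral_const, Real.volume_real_Ioo, max_eq_left (by linarith), smul_eq_mul]
  ring

end Quantile

section Bathtub

variable {X : Type*} [MeasurableSpace X] {μ τ : Measure X} {f : X → ℝ} {q ε : ℝ}

lemma integral_max_sub_eq_setIntegral (hfm : Measurable f) :
    ∫ x, max (f x - q) 0 ∂μ = ∫ x in {x | q < f x}, (f x - q) ∂μ := by
  rw [← integral_indicator (measurableSet_lt measurable_const hfm)]
  congr 1 with x
  by_cases hx : q < f x
  · rw [indicator_of_mem (show x ∈ {x | q < f x} from hx), max_eq_left (sub_nonneg.2 hx.le)]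
  · rw [indicator_of_notMem (show x ∉ {x | q < f x} from hx),
      max_eq_right (sub_nonpos.2 (not_lt.1 hx))]

variable [IsFiniteMeasure μ]

lemma integral_le_integral_max_sub_add_mul (hf : Integrable f μ) (hτ : τ ≤ μ)
    (hτε : τ univ ≤ ENNReal.ofReal ε) (hq : 0 ≤ q) (hε : 0 ≤ ε) :
    ∫ x, f x ∂τ ≤ ∫ x, max (f x - q) 0 ∂μ + q * ε := by
  have : IsFiniteMeasure τ := isFiniteMeasure_of_le μ hτ
  have hg : Integrable (fun x => max (f x - q) 0) μ := (hf.sub (integrable_const q)).pos_part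
  calc ∫ x, f x ∂τ ≤ ∫ x, (max (f x - q) 0 + q) ∂τ :=
        integral_mono (hf.mono_measure hτ) ((hg.mono_measure hτ).add (integrable_const q))
          fun x => by linarith [le_max_left (f x - q) 0]
    _ = ∫ x, max (f x - q) 0 ∂τ + q * τ.real univ := by
        rw [integral_add (hg.mono_measure hτ) (integrable_const q), integral_const, smul_eq_mul,
          mul_comm]
    _ ≤ ∫ x, max (f x - q) 0 ∂μ + q * ε :=
        add_le_add (integral_mono_measure hτ (ae_of_all _ fun _ => le_max_right _ _) hg)
          (mul_le_mul_of_nonneg_left (ENNReal.toReal_le_of_le_ofReal hε hτε) hq)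

lemma exists_le_measure_univ_eq_integral_eq (hfm : Measurable f) (hf : Integrable f μ)
    (hε : 0 ≤ ε) (hlt : μ {x | q < f x} ≤ ENNReal.ofReal ε)
    (hle : ENNReal.ofReal ε ≤ μ {x | q ≤ f x}) :
    ∃ τ ≤ μ, τ univ = ENNReal.ofReal ε ∧ ∫ x, f x ∂τ = ∫ x, max (f x - q) 0 ∂μ + q * ε := by
  set A := {x | q < f x}
  set B := {x | f x = q}
  have hAm : MeasurableSet A := measurableSet_lt measurable_const hfm
  have hBm : MeasurableSet B := measurableSet_eq_fun hfm measurable_const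
  have hAB : Disjoint A B := disjoint_left.2 fun x (hxA : q < f x) (hxB : f x = q) => hxA.ne' hxB
  have hB : ENNReal.ofReal ε - μ A ≤ μ B := by
    have hunion : {x | q ≤ f x} = A ∪ B := by
      ext x
      simp only [A, B, mem_union, mem_ofPred, le_iff_lt_or_eq, eq_comm]
    rw [tsub_le_iff_left, ← measure_union hAB hBm, ← hunion]
    exact hle
  set θ := (ENNReal.ofReal ε - μ A) / μ B
  have hθ1 : θ ≤ 1 := ENNReal.div_le_of_le_mul (by rwa [one_mul])
  have hθB : θ * μ B = ENNReal.ofReal ε - μ A := by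
    by_cases hB0 : μ B = 0
    · rw [hB0, mul_zero]
      exact (nonpos_iff_eq_zero.1 (hB.trans_eq hB0)).symm
    · exact ENNReal.div_mul_cancel hB0 (measure_ne_top μ B)
  refine ⟨μ.restrict A + θ • μ.restrict B, ?_, ?_, ?_⟩
  · calc μ.restrict A + θ • μ.restrict B ≤ μ.restrict A + μ.restrict B := by
          gcongr
          exact Measure.le_iff'.2 fun s => by
            simpa using mul_le_of_le_one_left zero_le hθ1
      _ = μ.restrict (A ∪ B) := (Measure.restrict_union hAB hBm).symm
      _ ≤ μ := Measure.restrict_le_self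
  · simp [hθB, add_tsub_cancel_of_le hlt]
  · have hθB' : θ.toReal * μ.real B = ε - μ.real A := by
      rw [measureReal_def, ← ENNReal.toReal_mul, hθB,
        ENNReal.toReal_sub_of_le hlt ENNReal.ofReal_ne_top, ENNReal.toReal_ofReal hε,
        measureReal_def]
    have hIB : ∫ x in B, f x ∂μ = μ.real B * q := by
      rw [setIntegral_congr_fun hBm (g := fun _ => q) fun x hx => hx, setIntegral_const,
        smul_eq_mul]
    have hIA : ∫ x in A, (f x - q) ∂μ = ∫ x in A, f x ∂μ - μ.real A * q := by
      rw [integral_sub hf.integrableOn (integrable_const q), setIntegral_const, smul_eq_mul]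
    rw [integral_add_measure hf.integrableOn (hf.integrableOn.smul_measure
        (ne_top_of_le_ne_top ENNReal.one_ne_top hθ1)),
      integral_smul_measure, smul_eq_mul, hIB, integral_max_sub_eq_setIntegral hfm, hIA]
    linear_combination q * hθB'

theorem isGreatest_integral_of_le_of_measure_univ_le (hfm : Measurable f) (hf : Integrable f μ)
    (hq : 0 ≤ q) (hε : 0 ≤ ε) (hlt : μ {x | q < f x} ≤ ENNReal.ofReal ε)
    (hle : ENNReal.ofReal ε ≤ μ {x | q ≤ f x}) :
    IsGreatest {c | ∃ τ : Measure X, τ ≤ μ ∧ τ univ ≤ ENNReal.ofReal ε ∧ c = ∫ x, f x ∂τ}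
      (∫ x, max (f x - q) 0 ∂μ + q * ε) := by
  obtain ⟨τ, hτ, hτε, hτf⟩ := exists_le_measure_univ_eq_integral_eq hfm hf hε hlt hle
  exact ⟨⟨τ, hτ, hτε.le, hτf.symm⟩, fun _ ⟨τ, hτ, hτε, hc⟩ =>
    hc ▸ integral_le_integral_max_sub_add_mul hf hτ hτε hq hε⟩

end Bathtub

theorem stmt5_general {X : Type*} [MetricSpace X]
    [MeasurableSpace X] [BorelSpace X]
    (r : ℝ) (x₀ : X) (μ : Measure X) [IsProbabilityMeasure μ]
    (hmom : Integrable (fun x => dist x x₀ ^ r) μ)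
    (ε : ℝ) (hε : ε ∈ Set.Ioo (0 : ℝ) 1) :
    Ieps r x₀ μ ε
      = ∫ u in Set.Ioo (1 - ε) 1, quantile' (μ.map (fun x => dist x x₀ ^ r)) u := by
  obtain ⟨hε0, hε1⟩ := hε
  set f : X → ℝ := fun x => dist x x₀ ^ r
  have hfm : Measurable f := (continuous_id.dist continuous_const).measurable.pow_const r
  set η := μ.map f
  have : IsProbabilityMeasure η := Measure.isProbabilityMeasure_map hfm.aemeasurable
  have hη : Integrable id η :=
    (integrable_map_measure aestronglyMeasurable_id hfm.aemeasurable).2 hmom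
  have hη0 : η (Iio 0) = 0 := by
    rw [Measure.map_apply hfm measurableSet_Iio, eq_empty_of_forall_notMem (s := f ⁻¹' Iio 0)
      fun x hx => (Real.rpow_nonneg dist_nonneg r).not_gt hx, measure_empty]
  have hu0 : 0 < 1 - ε := sub_pos.2 hε1
  have hu1 : 1 - ε < 1 := sub_lt_self 1 hε0
  set q := quantile' η (1 - ε)
  have hlt : μ {x | q < f x} ≤ ENNReal.ofReal ε := by
    have := measure_Ioi_quantile'_le (η := η) hu0 hu1
    rwa [Measure.map_apply hfm measurableSet_Ioi, sub_sub_cancel] at this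
  have hle : ENNReal.ofReal ε ≤ μ {x | q ≤ f x} := by
    have := le_measure_Ici_quantile' (η := η) hu0
    rwa [Measure.map_apply hfm measurableSet_Ici, sub_sub_cancel] at this
  rw [Ieps, (isGreatest_integral_of_le_of_measure_univ_le hfm hmom
      (quantile'_nonneg hη0 hu0) hε0.le hlt hle).csSup_eq,
    setIntegral_Ioo_quantile' hη hu0 hu1, sub_sub_cancel,
    integral_map hfm.aemeasurable
      ((continuous_sub_right q).max continuous_const).aestronglyMeasurable]

/-- For a probability measure `μ` with finite `r`-th moment on a Polish space and
`μ̄` the pushforward of `μ` under `x ↦ d(x,x₀)^r`, for every `ε ∈ (0,1)`,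
`I^r_ε(μ) = ∫_{1-ε}^1 F_{μ̄}⁻¹(u) du`. -/
theorem stmt5 {X : Type*} [MetricSpace X] [CompleteSpace X]
    [SecondCountableTopology X] [MeasurableSpace X] [BorelSpace X]
    (r : ℝ) (hr : 1 ≤ r) (x₀ : X) (μ : Measure X) [IsProbabilityMeasure μ]
    (hmom : Integrable (fun x => dist x x₀ ^ r) μ)
    (ε : ℝ) (hε : ε ∈ Set.Ioo (0 : ℝ) 1) :
    Ieps r x₀ μ ε
      = ∫ u in Set.Ioo (1 - ε) 1, quantile' (μ.map (fun x => dist x x₀ ^ r)) u :=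
  stmt5_general r x₀ μ hmom ε hε
end

section
/- Let r ≥ 1, and μ, μ' be finite positive measures on a Polish space X with equal mass and finite r-th moments. Then I^r_ε(μ) ≤ 2^{r-1}( I^r_ε(μ') + W_r^r(μ,μ') ), where W_r is the Wasserstein distance of order r. -/
open MeasureTheory

/-- `W_r^r(μ,ν) = inf { ∫ d(x,y)^r dπ : π ∈ Π(μ,ν) }`. -/
noncomputable def WrRpow {X : Type*} [MetricSpace X] [MeasurableSpace X]
    (r : ℝ) (μ ν : Measure X) : ℝ :=
  sInf {c : ℝ | ∃ π : Measure (X × X), π.map Prod.fst = μ ∧ π.map Prod.snd = ν ∧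
    c = ∫ p, dist p.1 p.2 ^ r ∂π}

namespace MeasureTheory.Measure

variable {α β : Type*} [MeasurableSpace α] [MeasurableSpace β]

theorem map_withDensity_comp {π : Measure α} {f : α → β} (hf : Measurable f) {g : β → ENNReal}
    (hg : Measurable g) : (π.withDensity (g ∘ f)).map f = (π.map f).withDensity g := by
  ext s hs
  rw [map_apply hf hs, withDensity_apply _ (hf hs), withDensity_apply _ hs,
    setLIntegral_map hs hg hf, Function.comp_def]

theorem exists_le_map_eq_of_le {π : Measure α} {f : α → β} (hf : Measurable f)
    {μ τ : Measure β} [SigmaFinite μ] (hπ : π.map f = μ) (hτ : τ ≤ μ) :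
    ∃ σ ≤ π, σ.map f = τ := by
  subst hπ
  have : SigmaFinite τ := sigmaFinite_of_le _ hτ
  refine ⟨π.withDensity (τ.rnDeriv (π.map f) ∘ f), ?_, ?_⟩
  · have hle : τ.rnDeriv (π.map f) ∘ f ≤ᵐ[π] 1 :=
      ae_of_ae_map hf.aemeasurable (p := fun y => τ.rnDeriv (π.map f) y ≤ 1)
        (rnDeriv_le_one_of_le hτ)
    simpa only [withDensity_one] using withDensity_mono hle
  · rw [map_withDensity_comp hf (measurable_rnDeriv _ _),
      withDensity_rnDeriv_eq _ _ (absolutelyContinuous_of_le hτ)]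

theorem exists_map_fst_eq_map_snd_eq {μ : Measure α} {ν : Measure β} [IsFiniteMeasure μ]
    (h : μ Set.univ = ν Set.univ) :
    ∃ π : Measure (α × β), π.map Prod.fst = μ ∧ π.map Prod.snd = ν := by
  have : IsFiniteMeasure ν := ⟨h ▸ measure_lt_top μ _⟩
  by_cases h0 : μ Set.univ = 0
  · refine ⟨0, ?_, ?_⟩
    · simp [measure_univ_eq_zero.1 h0]
    · simp [measure_univ_eq_zero.1 (h ▸ h0)]
  · have hinv : (μ Set.univ)⁻¹ * μ Set.univ = 1 := ENNReal.inv_mul_cancel h0 (measure_ne_top μ _)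
    refine ⟨(μ Set.univ)⁻¹ • μ.prod ν, ?_, ?_⟩
    · rw [Measure.map_smul, map_fst_prod, ← h, smul_smul, hinv, one_smul]
    · rw [Measure.map_smul, map_snd_prod, smul_smul, hinv, one_smul]

end MeasureTheory.Measure

theorem Real.add_rpow_le_two_rpow_mul {r : ℝ} (hr : 1 ≤ r) {a b : ℝ} (ha : 0 ≤ a) (hb : 0 ≤ b) :
    (a + b) ^ r ≤ 2 ^ (r - 1) * (a ^ r + b ^ r) := by
  lift a to NNReal using ha
  lift b to NNReal using hb
  exact_mod_cast NNReal.rpow_add_le_mul_rpow_add_rpow a b hr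

theorem dist_rpow_le_two_rpow_mul {X : Type*} [PseudoMetricSpace X] {r : ℝ} (hr : 1 ≤ r)
    (x y z : X) : dist x z ^ r ≤ 2 ^ (r - 1) * (dist x y ^ r + dist y z ^ r) :=
  (Real.rpow_le_rpow dist_nonneg (dist_triangle x y z) (zero_le_one.trans hr)).trans
    (Real.add_rpow_le_two_rpow_mul hr dist_nonneg dist_nonneg)

section Transport

variable {X : Type*} [MetricSpace X] [MeasurableSpace X] {r : ℝ} {x₀ : X} {ε : ℝ}
  {μ μ' : Measure X}

theorem integral_le_Ieps (hmom : Integrable (fun x => dist x x₀ ^ r) μ) {τ : Measure X}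
    (hτ : τ ≤ μ) (hτε : τ Set.univ ≤ ENNReal.ofReal ε) :
    ∫ x, dist x x₀ ^ r ∂τ ≤ Ieps r x₀ μ ε := by
  refine le_csSup ⟨∫ x, dist x x₀ ^ r ∂μ, ?_⟩ ⟨τ, hτ, hτε, rfl⟩
  rintro c ⟨ν, hν, -, rfl⟩
  exact integral_mono_measure hν (.of_forall fun x => by positivity) hmom

theorem Ieps_le_of_forall_le {C : ℝ}
    (h : ∀ τ ≤ μ, τ Set.univ ≤ ENNReal.ofReal ε → ∫ x, dist x x₀ ^ r ∂τ ≤ C) :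
    Ieps r x₀ μ ε ≤ C := by
  refine csSup_le ⟨0, 0, Measure.zero_le μ, by simp, (integral_zero_measure _).symm⟩ ?_
  rintro c ⟨τ, hτ, hτε, rfl⟩
  exact h τ hτ hτε

theorem le_WrRpow_of_forall_le {C : ℝ}
    (hne : ∃ π : Measure (X × X), π.map Prod.fst = μ ∧ π.map Prod.snd = μ')
    (h : ∀ π : Measure (X × X), π.map Prod.fst = μ → π.map Prod.snd = μ' →
      C ≤ ∫ p, dist p.1 p.2 ^ r ∂π) :
    C ≤ WrRpow r μ μ' := by
  obtain ⟨π, hπ, hπ'⟩ := hne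
  refine le_csInf ⟨_, π, hπ, hπ', rfl⟩ ?_
  rintro c ⟨π, hπ, hπ', rfl⟩
  exact h π hπ hπ'

variable [BorelSpace X]

theorem integrable_dist_rpow_comp {Y : Type*} [MeasurableSpace Y] {π : Measure Y} {f : Y → X}
    (hf : Measurable f) (hmom : Integrable (fun x => dist x x₀ ^ r) (π.map f)) :
    Integrable (fun y => dist (f y) x₀ ^ r) π :=
  (integrable_map_measure (by fun_prop : Measurable fun x => dist x x₀ ^ r).aestronglyMeasurable
    hf.aemeasurable).1 hmom

variable [SecondCountableTopology X]

theorem integrable_dist_rpow_of_map (hr : 1 ≤ r) {π : Measure (X × X)}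
    (hmom : Integrable (fun x => dist x x₀ ^ r) (π.map Prod.fst))
    (hmom' : Integrable (fun x => dist x x₀ ^ r) (π.map Prod.snd)) :
    Integrable (fun p : X × X => dist p.1 p.2 ^ r) π := by
  refine (((integrable_dist_rpow_comp measurable_fst hmom).add
    (integrable_dist_rpow_comp measurable_snd hmom')).const_mul (2 ^ (r - 1))).mono'
    (by fun_prop : Measurable fun p : X × X => dist p.1 p.2 ^ r).aestronglyMeasurable
    (.of_forall fun p => ?_)
  rw [Real.norm_of_nonneg (by positivity), Pi.add_apply, dist_comm p.2 x₀]
  exact dist_rpow_le_two_rpow_mul hr p.1 x₀ p.2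

theorem integral_dist_rpow_le_Ieps_add (hr : 1 ≤ r)
    (hmom : Integrable (fun x => dist x x₀ ^ r) μ)
    (hmom' : Integrable (fun x => dist x x₀ ^ r) μ') [SigmaFinite μ]
    {τ : Measure X} (hτ : τ ≤ μ) (hτε : τ Set.univ ≤ ENNReal.ofReal ε)
    {π : Measure (X × X)} (hπ : π.map Prod.fst = μ) (hπ' : π.map Prod.snd = μ') :
    ∫ x, dist x x₀ ^ r ∂τ ≤ 2 ^ (r - 1) * (Ieps r x₀ μ' ε + ∫ p, dist p.1 p.2 ^ r ∂π) := by
  obtain ⟨σ, hσπ, hστ⟩ := Measure.exists_le_map_eq_of_le measurable_fst hπ hτ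
  set τ' := σ.map Prod.snd
  have hτ' : τ' ≤ μ' := hπ' ▸ Measure.map_mono hσπ measurable_snd
  have hτ'ε : τ' Set.univ ≤ ENNReal.ofReal ε := by
    rw [← hστ] at hτε
    simpa [τ', Measure.map_apply measurable_fst, Measure.map_apply measurable_snd] using hτε
  have hcostπ : Integrable (fun p : X × X => dist p.1 p.2 ^ r) π :=
    integrable_dist_rpow_of_map hr (hπ ▸ hmom) (hπ' ▸ hmom')
  have hcost := hcostπ.mono_measure hσπ
  have hsnd : Integrable (fun p : X × X => dist p.2 x₀ ^ r) σ :=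
    (integrable_dist_rpow_comp measurable_snd (hπ' ▸ hmom')).mono_measure hσπ
  have hmeas : Measurable fun x : X => dist x x₀ ^ r := by fun_prop
  calc ∫ x, dist x x₀ ^ r ∂τ
      = ∫ p : X × X, dist p.1 x₀ ^ r ∂σ := by
        rw [← hστ, integral_map measurable_fst.aemeasurable hmeas.aestronglyMeasurable]
    _ ≤ ∫ p : X × X, 2 ^ (r - 1) * (dist p.1 p.2 ^ r + dist p.2 x₀ ^ r) ∂σ :=
        integral_mono_of_nonneg (.of_forall fun p => by positivity)
          ((hcost.add hsnd).const_mul _)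
          (.of_forall fun p => dist_rpow_le_two_rpow_mul hr p.1 p.2 x₀)
    _ = 2 ^ (r - 1) * (∫ p : X × X, dist p.1 p.2 ^ r ∂σ + ∫ x, dist x x₀ ^ r ∂τ') := by
        rw [integral_const_mul, integral_add hcost hsnd,
          integral_map measurable_snd.aemeasurable hmeas.aestronglyMeasurable]
    _ ≤ 2 ^ (r - 1) * (Ieps r x₀ μ' ε + ∫ p, dist p.1 p.2 ^ r ∂π) := by
        rw [add_comm]
        gcongr 2 ^ (r - 1) * (?_ + ?_)
        · exact integral_le_Ieps hmom' hτ' hτ'ε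
        · exact integral_mono_measure hσπ (.of_forall fun p => by positivity) hcostπ

end Transport

theorem stmt6_general {X : Type*} [MetricSpace X]
    [SecondCountableTopology X] [MeasurableSpace X] [BorelSpace X]
    (r : ℝ) (hr : 1 ≤ r) (x₀ : X) (μ μ' : Measure X)
    [IsFiniteMeasure μ]
    (hmass : μ Set.univ = μ' Set.univ)
    (hmom : Integrable (fun x => dist x x₀ ^ r) μ)
    (hmom' : Integrable (fun x => dist x x₀ ^ r) μ')
    (ε : ℝ) :
    Ieps r x₀ μ ε ≤ (2 : ℝ) ^ (r - 1) * (Ieps r x₀ μ' ε + WrRpow r μ μ') := by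
  have h2pos : (0 : ℝ) < 2 ^ (r - 1) := by positivity
  refine Ieps_le_of_forall_le fun τ hτ hτε => ?_
  have hW : (∫ x, dist x x₀ ^ r ∂τ) / 2 ^ (r - 1) - Ieps r x₀ μ' ε ≤ WrRpow r μ μ' := by
    refine le_WrRpow_of_forall_le (Measure.exists_map_fst_eq_map_snd_eq hmass) fun π hπ hπ' => ?_
    rw [sub_le_iff_le_add', div_le_iff₀' h2pos]
    exact integral_dist_rpow_le_Ieps_add hr hmom hmom' hτ hτε hπ hπ'
  rwa [sub_le_iff_le_add', div_le_iff₀' h2pos] at hW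

/-- `I^r_ε(μ) ≤ 2^{r-1} (I^r_ε(μ') + W_r^r(μ,μ'))`. -/
theorem stmt6 {X : Type*} [MetricSpace X] [CompleteSpace X]
    [SecondCountableTopology X] [MeasurableSpace X] [BorelSpace X]
    (r : ℝ) (hr : 1 ≤ r) (x₀ : X) (μ μ' : Measure X)
    [IsFiniteMeasure μ] [IsFiniteMeasure μ']
    (hmass : μ Set.univ = μ' Set.univ)
    (hmom : Integrable (fun x => dist x x₀ ^ r) μ)
    (hmom' : Integrable (fun x => dist x x₀ ^ r) μ')
    (ε : ℝ) (hε : 0 < ε) :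
    Ieps r x₀ μ ε ≤ (2 : ℝ) ^ (r - 1) * (Ieps r x₀ μ' ε + WrRpow r μ μ') :=
  stmt6_general r hr x₀ μ μ' hmass hmom hmom' ε
end

section
/- Let r ≥ 1 and μ be a finite positive measure on ℝ^d with finite r-th moment and barycentre m₁ (mean of μ normalized appropriately; for finite measures interpret m₁ = (1/μ(ℝ^d))∫x dμ, or take μ a probability measure). For α ≥ 0 let μ^α be the pushforward of μ under y ↦ α(y - m₁) + m₁. Then for all α, β ≥ 0, W_r(μ^α, μ^β) = |β - α| (∫ |x - m₁|^r dμ(x))^{1/r}. -/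
/-!
The coupling `y ↦ (α • (y - m) + m, β • (y - m) + m)` of `μ^α` and `μ^β` costs exactly
`|β - α|^r ∫ ‖y - m‖^r dμ`. Conversely, for any coupling `π` of `μ^α` and `μ^β` the marginal
conditions give `‖X - m‖_{L^r(π)} = α ‖· - m‖_{L^r(μ)}` and `‖Y - m‖_{L^r(π)} = β ‖· - m‖_{L^r(μ)}`,
so Minkowski's inequality in `L^r(π)` yields `|β - α| ‖· - m‖_{L^r(μ)} ≤ ‖X - Y‖_{L^r(π)}`.
-/

open MeasureTheory

open ENNReal

lemma MeasureTheory.MemLp.integral_norm_rpow_eq {Ω E : Type*} [MeasurableSpace Ω]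
    [NormedAddCommGroup E] {μ : Measure Ω} {f : Ω → E} {r : ℝ} (hr : 0 < r)
    (hf : MemLp f (ENNReal.ofReal r) μ) :
    ∫ ω, ‖f ω‖ ^ r ∂μ = (eLpNorm f (ENNReal.ofReal r) μ).toReal ^ r := by
  rw [hf.eLpNorm_eq_integral_rpow_norm (by simpa using hr) ofReal_ne_top,
    toReal_ofReal hr.le, toReal_ofReal (by positivity),
    Real.rpow_inv_rpow (integral_nonneg fun _ => by positivity) hr.ne']

lemma MeasureTheory.eLpNorm_sub_le_eLpNorm_sub_add {Ω E : Type*} [MeasurableSpace Ω]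
    [NormedAddCommGroup E] {μ : Measure Ω} {p : ℝ≥0∞} {f g h : Ω → E}
    (hf : AEStronglyMeasurable f μ) (hg : AEStronglyMeasurable g μ)
    (hh : AEStronglyMeasurable h μ) (hp : 1 ≤ p) :
    eLpNorm (f - h) p μ ≤ eLpNorm (f - g) p μ + eLpNorm (g - h) p μ := by
  simpa using eLpNorm_add_le (hf.sub hg) (hg.sub hh) hp

lemma ENNReal.ofReal_abs_sub_mul_le {a b : ℝ} (ha : 0 ≤ a) (hb : 0 ≤ b) {M c : ℝ≥0∞}
    (hM : M ≠ ∞) (hab : ENNReal.ofReal a * M ≤ c + ENNReal.ofReal b * M)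
    (hba : ENNReal.ofReal b * M ≤ c + ENNReal.ofReal a * M) :
    ENNReal.ofReal |b - a| * M ≤ c := by
  wlog h : a ≤ b generalizing a b
  · rw [abs_sub_comm]
    exact this hb ha hba hab (le_of_not_ge h)
  rw [abs_of_nonneg (sub_nonneg.2 h), ofReal_sub _ ha, ENNReal.sub_mul fun _ _ => hM]
  exact tsub_le_iff_right.2 hba

section Dilation

variable {E : Type*} [NormedAddCommGroup E] [NormedSpace ℝ E] [MeasurableSpace E]
  [BorelSpace E] [SecondCountableTopology E] {μ : Measure E} {m : E}

lemma eLpNorm_sub_of_map_eq_map_dilation {Ω : Type*} [MeasurableSpace Ω] {π : Measure Ω}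
    {f : Ω → E} (hf : Measurable f) {γ : ℝ} (p : ℝ≥0∞)
    (hπ : π.map f = μ.map (fun y => γ • (y - m) + m)) :
    eLpNorm (fun ω => f ω - m) p π = ‖γ‖ₑ * eLpNorm (fun x => x - m) p μ := by
  have hsub : AEStronglyMeasurable (fun x : E => x - m) (μ.map fun y => γ • (y - m) + m) := by
    fun_prop
  rw [← eLpNorm_const_smul, ← Function.comp_def (fun x => x - m) f,
    ← eLpNorm_map_measure (hπ ▸ hsub) hf.aemeasurable, hπ,
    eLpNorm_map_measure hsub (by fun_prop)]
  congr 1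
  ext y
  simp only [Function.comp_apply, add_sub_cancel_right, Pi.smul_apply]

lemma integral_dist_rpow_map_dilation_prod {r : ℝ} (hr : 0 ≤ r) (α β : ℝ) :
    ∫ q, dist q.1 q.2 ^ r ∂(μ.map fun y => (α • (y - m) + m, β • (y - m) + m))
      = |β - α| ^ r * ∫ x, ‖x - m‖ ^ r ∂μ := by
  have hdist : ∀ y : E, dist (α • (y - m) + m) (β • (y - m) + m) ^ r
      = |β - α| ^ r * ‖y - m‖ ^ r := fun y => by
    rw [dist_eq_norm, add_sub_add_right_eq_sub, ← sub_smul, norm_smul, Real.norm_eq_abs,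
      abs_sub_comm, Real.mul_rpow (abs_nonneg _) (norm_nonneg _)]
  rw [integral_map (by fun_prop) (by fun_prop)]
  simp_rw [hdist]
  exact integral_const_mul _ _

section Coupling

variable {p : ℝ≥0∞} {α β : ℝ} {π : Measure (E × E)}
  (h₁ : π.map Prod.fst = μ.map (fun y => α • (y - m) + m))
  (h₂ : π.map Prod.snd = μ.map (fun y => β • (y - m) + m))
include h₁ h₂

lemma eLpNorm_fst_sub_snd_ne_top_of_coupling (hp : 1 ≤ p)
    (hM : eLpNorm (fun x => x - m) p μ ≠ ∞) :
    eLpNorm (fun q : E × E => q.1 - q.2) p π ≠ ∞ := by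
  have htri : eLpNorm (fun q : E × E => q.1 - q.2) p π
      ≤ eLpNorm (fun q : E × E => q.1 - m) p π + eLpNorm (fun q : E × E => m - q.2) p π :=
    eLpNorm_sub_le_eLpNorm_sub_add (by fun_prop) aestronglyMeasurable_const (by fun_prop) hp
  have hswap : eLpNorm (fun q : E × E => m - q.2) p π
      = eLpNorm (fun q : E × E => q.2 - m) p π := eLpNorm_sub_comm (fun _ => m) Prod.snd p π
  rw [hswap, eLpNorm_sub_of_map_eq_map_dilation measurable_fst p h₁,
    eLpNorm_sub_of_map_eq_map_dilation measurable_snd p h₂] at htri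
  exact ne_top_of_le_ne_top (by finiteness) htri

lemma ofReal_abs_sub_mul_eLpNorm_le_of_coupling (hp : 1 ≤ p)
    (hM : eLpNorm (fun x => x - m) p μ ≠ ∞) (hα : 0 ≤ α) (hβ : 0 ≤ β) :
    ENNReal.ofReal |β - α| * eLpNorm (fun x => x - m) p μ
      ≤ eLpNorm (fun q : E × E => q.1 - q.2) p π := by
  have hfst : eLpNorm (fun q : E × E => q.1 - m) p π
      = ENNReal.ofReal α * eLpNorm (fun x => x - m) p μ := by
    rw [eLpNorm_sub_of_map_eq_map_dilation measurable_fst p h₁, Real.enorm_eq_ofReal hα]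
  have hsnd : eLpNorm (fun q : E × E => q.2 - m) p π
      = ENNReal.ofReal β * eLpNorm (fun x => x - m) p μ := by
    rw [eLpNorm_sub_of_map_eq_map_dilation measurable_snd p h₂, Real.enorm_eq_ofReal hβ]
  have htri₁ : eLpNorm (fun q : E × E => q.1 - m) p π
      ≤ eLpNorm (fun q : E × E => q.1 - q.2) p π + eLpNorm (fun q : E × E => q.2 - m) p π :=
    eLpNorm_sub_le_eLpNorm_sub_add (by fun_prop) (by fun_prop) aestronglyMeasurable_const hp
  have htri₂ : eLpNorm (fun q : E × E => q.2 - m) p π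
      ≤ eLpNorm (fun q : E × E => q.2 - q.1) p π + eLpNorm (fun q : E × E => q.1 - m) p π :=
    eLpNorm_sub_le_eLpNorm_sub_add (by fun_prop) (by fun_prop) aestronglyMeasurable_const hp
  have hswap : eLpNorm (fun q : E × E => q.2 - q.1) p π
      = eLpNorm (fun q : E × E => q.1 - q.2) p π := eLpNorm_sub_comm Prod.snd Prod.fst p π
  rw [hswap] at htri₂
  rw [hfst, hsnd] at htri₁ htri₂
  exact ofReal_abs_sub_mul_le hα hβ hM htri₁ htri₂

lemma le_integral_dist_rpow_of_coupling {r : ℝ} (hr : 1 ≤ r)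
    (hM : MemLp (fun x => x - m) (ENNReal.ofReal r) μ) (hα : 0 ≤ α) (hβ : 0 ≤ β) :
    |β - α| ^ r * ∫ x, ‖x - m‖ ^ r ∂μ ≤ ∫ q, dist q.1 q.2 ^ r ∂π := by
  have hr₀ : 0 < r := zero_lt_one.trans_le hr
  have hp : 1 ≤ ENNReal.ofReal r := by simpa using hr
  have hfin := eLpNorm_fst_sub_snd_ne_top_of_coupling h₁ h₂ hp hM.eLpNorm_ne_top
  have hcost : MemLp (fun q : E × E => q.1 - q.2) (ENNReal.ofReal r) π :=
    ⟨by fun_prop, hfin.lt_top⟩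
  calc |β - α| ^ r * ∫ x, ‖x - m‖ ^ r ∂μ
      = (ENNReal.ofReal |β - α| * eLpNorm (fun x => x - m) (ENNReal.ofReal r) μ).toReal ^ r := by
        rw [hM.integral_norm_rpow_eq hr₀, toReal_mul, toReal_ofReal (abs_nonneg _),
          Real.mul_rpow (abs_nonneg _) toReal_nonneg]
    _ ≤ (eLpNorm (fun q : E × E => q.1 - q.2) (ENNReal.ofReal r) π).toReal ^ r :=
        Real.rpow_le_rpow toReal_nonneg (toReal_mono hfin
          (ofReal_abs_sub_mul_eLpNorm_le_of_coupling h₁ h₂ hp hM.eLpNorm_ne_top hα hβ)) hr₀.le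
    _ = ∫ q, dist q.1 q.2 ^ r ∂π := by
        simp_rw [dist_eq_norm]
        exact (hcost.integral_norm_rpow_eq hr₀).symm

end Coupling

theorem wrRpow_map_dilation {r : ℝ} (hr : 1 ≤ r)
    (hM : MemLp (fun x => x - m) (ENNReal.ofReal r) μ) {α β : ℝ} (hα : 0 ≤ α) (hβ : 0 ≤ β) :
    WrRpow r (μ.map fun y => α • (y - m) + m) (μ.map fun y => β • (y - m) + m)
      = |β - α| ^ r * ∫ x, ‖x - m‖ ^ r ∂μ := by
  refine IsLeast.csInf_eq ⟨⟨μ.map fun y => (α • (y - m) + m, β • (y - m) + m), ?_, ?_,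
    (integral_dist_rpow_map_dilation_prod (by linarith) α β).symm⟩, ?_⟩
  · rw [Measure.map_map measurable_fst (by fun_prop)]
    rfl
  · rw [Measure.map_map measurable_snd (by fun_prop)]
    rfl
  · rintro _ ⟨π, h₁, h₂, rfl⟩
    exact le_integral_dist_rpow_of_coupling h₁ h₂ hr hM hα hβ

end Dilation

theorem stmt12_general {d : ℕ} (r : ℝ) (hr : 1 ≤ r)
    (μ : Measure (EuclideanSpace ℝ (Fin d))) [IsProbabilityMeasure μ]
    (hmom : Integrable (fun x => ‖x‖ ^ r) μ)
    (m₁ : EuclideanSpace ℝ (Fin d))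
    (α β : ℝ) (hα : 0 ≤ α) (hβ : 0 ≤ β) :
    (WrRpow r (μ.map (fun y => α • (y - m₁) + m₁))
        (μ.map (fun y => β • (y - m₁) + m₁))) ^ (1 / r)
      = |β - α| * (∫ x, ‖x - m₁‖ ^ r ∂μ) ^ (1 / r) := by
  have hr₀ : 0 < r := zero_lt_one.trans_le hr
  have hmomLp : MemLp id (ENNReal.ofReal r) μ := by
    rw [← integrable_norm_rpow_iff aestronglyMeasurable_id (by simpa using hr₀) ofReal_ne_top,
      toReal_ofReal hr₀.le]
    exact hmom
  rw [wrRpow_map_dilation hr (hmomLp.sub (memLp_const m₁)) hα hβ,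
    Real.mul_rpow (by positivity) (integral_nonneg fun _ => by positivity),
    ← Real.rpow_mul (abs_nonneg _), mul_one_div_cancel hr₀.ne', Real.rpow_one]

/-- For the dilations `μ^α` of `μ` about its barycentre `m₁`,
`W_r(μ^α, μ^β) = |β - α| (∫ |x - m₁|^r dμ)^{1/r}`. -/
theorem stmt12 {d : ℕ} (r : ℝ) (hr : 1 ≤ r)
    (μ : Measure (EuclideanSpace ℝ (Fin d))) [IsProbabilityMeasure μ]
    (hmom : Integrable (fun x => ‖x‖ ^ r) μ)
    (m₁ : EuclideanSpace ℝ (Fin d)) (hm : ∫ x, x ∂μ = m₁)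
    (α β : ℝ) (hα : 0 ≤ α) (hβ : 0 ≤ β) :
    (WrRpow r (μ.map (fun y => α • (y - m₁) + m₁))
        (μ.map (fun y => β • (y - m₁) + m₁))) ^ (1 / r)
      = |β - α| * (∫ x, ‖x - m₁‖ ^ r ∂μ) ^ (1 / r) :=
  stmt12_general r hr μ hmom m₁ α β hα hβ
end

section
/- Let μ be a probability measure on ℝ^d with finite first moment and barycentre m₁, and for α ≥ 0 let μ^α be the pushforward of μ under y ↦ α(y - m₁) + m₁. Then (μ^α)_{α ≥ 0} is a peacock: for 0 ≤ α ≤ β, μ^α ≤_c μ^β in the convex order. -/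
/-!
Write `h_r` for the homothety of ratio `r` about the barycentre `m`. For `0 ≤ α ≤ β` we have
`h_α = h_{α/β} ∘ h_β`, and `h_{α/β} x` is the convex combination `(α/β) x + (1 - α/β) m`, so
convexity of `f` bounds `f ∘ h_α` by `(α/β) f ∘ h_β + (1 - α/β) f m`. Since `h_β` preserves the
barycentre, Jensen's inequality gives `f m ≤ ∫ f ∘ h_β`, and integrating the bound concludes.
-/

open MeasureTheory AffineMap Set

variable {E : Type*} [NormedAddCommGroup E] [NormedSpace ℝ E]

lemma ConvexOn.comp_homothety_le {f : E → ℝ} (hf : ConvexOn ℝ univ f) (c y : E) {α β : ℝ}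
    (hα : 0 ≤ α) (hαβ : α ≤ β) :
    f (homothety c α y) ≤ α / β * f (homothety c β y) + (1 - α / β) * f c := by
  have hβ : 0 ≤ β := hα.trans hαβ
  -- for `β = 0` this holds because then `α = 0` (and `α / β = 0`)
  have hratio : α / β * β = α := by
    rcases hβ.eq_or_lt with rfl | hβ
    · simp [le_antisymm hαβ hα]
    · exact div_mul_cancel₀ α hβ.ne'
  have hcomb : homothety c α y = (α / β) • homothety c β y + (1 - α / β) • c := by
    conv_lhs => rw [← hratio, homothety_mul_apply, homothety_apply]
    simp only [vsub_eq_sub, vadd_eq_add]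
    module
  rw [hcomb]
  exact hf.2 (mem_univ _) (mem_univ _) (div_nonneg hα hβ)
    (sub_nonneg.2 (div_le_one_of_le₀ hαβ hβ)) (by ring)

section Integral

variable {Ω : Type*} [MeasurableSpace Ω] {μ : Measure Ω} {X : Ω → E}

lemma MeasureTheory.Integrable.homothety_comp [IsFiniteMeasure μ] (hX : Integrable X μ) (c : E)
    (r : ℝ) : Integrable (fun ω => homothety c r (X ω)) μ := by
  simp_rw [homothety_apply, vsub_eq_sub, vadd_eq_add]
  exact ((hX.sub (integrable_const c)).smul r).add (integrable_const c)

lemma integral_homothety_comp [CompleteSpace E] [IsProbabilityMeasure μ] (hX : Integrable X μ)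
    (c : E) (r : ℝ) :
    ∫ ω, homothety c r (X ω) ∂μ = homothety c r (∫ ω, X ω ∂μ) := by
  simp_rw [homothety_apply, vsub_eq_sub, vadd_eq_add]
  rw [integral_add (f := fun ω => r • (X ω - c)) ((hX.sub (integrable_const c)).smul r)
    (integrable_const c), integral_smul, integral_sub hX (integrable_const c)]
  simp

theorem integral_comp_homothety_mono [CompleteSpace E] [IsProbabilityMeasure μ]
    (hX : Integrable X μ) {f : E → ℝ} (hf : ConvexOn ℝ univ f) (hfc : Continuous f) {α β : ℝ}
    (hα : 0 ≤ α) (hαβ : α ≤ β)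
    (hfα : Integrable (fun ω => f (homothety (∫ ω, X ω ∂μ) α (X ω))) μ)
    (hfβ : Integrable (fun ω => f (homothety (∫ ω, X ω ∂μ) β (X ω))) μ) :
    ∫ ω, f (homothety (∫ ω, X ω ∂μ) α (X ω)) ∂μ
      ≤ ∫ ω, f (homothety (∫ ω, X ω ∂μ) β (X ω)) ∂μ := by
  set m := ∫ ω, X ω ∂μ
  set I := ∫ ω, f (homothety m β (X ω)) ∂μ
  have hjensen : f m ≤ I := by
    have := hf.map_integral_le hfc.continuousOn isClosed_univ (.of_forall fun _ => mem_univ _)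
      (hX.homothety_comp m β) hfβ
    rwa [integral_homothety_comp hX, homothety_apply_same] at this
  calc ∫ ω, f (homothety m α (X ω)) ∂μ
      ≤ ∫ ω, (α / β * f (homothety m β (X ω)) + (1 - α / β) * f m) ∂μ :=
        integral_mono hfα ((hfβ.const_mul _).add (integrable_const _))
          fun ω => hf.comp_homothety_le m (X ω) hα hαβ
    _ = α / β * I + (1 - α / β) * f m := by
        rw [integral_add (hfβ.const_mul _) (integrable_const _), integral_const_mul,
          integral_const]
        simp [I]
    _ ≤ α / β * I + (1 - α / β) * I := by
        gcongr
        exact sub_nonneg.2 (div_le_one_of_le₀ hαβ (hα.trans hαβ))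
    _ = I := by ring

end Integral

/-- The dilations `(μ^α)_{α ≥ 0}` of a probability measure about its barycentre form a
peacock: `μ^α ≤_c μ^β` for `0 ≤ α ≤ β`. -/
theorem stmt13 {d : ℕ} (μ : Measure (EuclideanSpace ℝ (Fin d))) [IsProbabilityMeasure μ]
    (hμi : Integrable (fun x => ‖x‖) μ)
    (m₁ : EuclideanSpace ℝ (Fin d)) (hm : ∫ x, x ∂μ = m₁)
    (α β : ℝ) (h0 : 0 ≤ α) (hαβ : α ≤ β) :
    ∀ f : EuclideanSpace ℝ (Fin d) → ℝ, ConvexOn ℝ Set.univ f →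
      Integrable f (μ.map (fun y => α • (y - m₁) + m₁)) →
      Integrable f (μ.map (fun y => β • (y - m₁) + m₁)) →
      ∫ x, f x ∂(μ.map (fun y => α • (y - m₁) + m₁))
        ≤ ∫ x, f x ∂(μ.map (fun y => β • (y - m₁) + m₁)) := by
  intro f hf hfα hfβ
  have hfc : Continuous f := continuousOn_univ.1 (hf.continuousOn isOpen_univ)
  have hX : Integrable (fun x => x) μ := (integrable_norm_iff aestronglyMeasurable_id).1 hμi
  have hT : ∀ r : ℝ, (fun y => r • (y - m₁) + m₁) = homothety (∫ x, x ∂μ) r := fun r => by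
    ext1 y; rw [homothety_apply, hm]; rfl
  simp_rw [hT] at hfα hfβ ⊢
  rw [integrable_map_measure hfc.aestronglyMeasurable (by fun_prop)] at hfα hfβ
  rw [integral_map (by fun_prop) hfc.aestronglyMeasurable,
    integral_map (by fun_prop) hfc.aestronglyMeasurable]
  exact integral_comp_homothety_mono hX hf hfc h0 hαβ hfα hfβ
end

section
/- Let X, Y be Polish spaces and m₀ > 0. For finite positive measures π, π' on X×Y with common mass m₀ and finite r-th moments, the adapted Wasserstein distance AW_r(π, π') = inf over χ ∈ Π(μ, μ') of ( ∫ (d_X(x,x')^r + W_r^r(π_x, π'_{x'})) dχ )^{1/r} satisfies AW_r(π, π') = W_r(J(π), J(π')), where J(π)(dx, dp) = μ(dx) δ_{π_x}(dp) is the canonical embedding into measures on X × P(Y), and X × P_r(Y) carries the metric ((x,p),(x',p')) ↦ (d_X(x,x')^r + W_r^r(p, p'))^{1/r}. -/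
open MeasureTheory

/-- The canonical embedding `J(π)(dx,dp) = μ(dx) δ_{π_x}(dp)` of a measure on `X × Y`
into the measures on `X × P(Y)`. -/
noncomputable def Jembed {X Y : Type*}
    [MeasurableSpace X]
    [MetricSpace Y] [CompleteSpace Y] [SecondCountableTopology Y]
    [MeasurableSpace Y] [BorelSpace Y] [Nonempty Y]
    (π : Measure (X × Y)) [IsFiniteMeasure π] : Measure (X × Measure Y) :=
  (π.map Prod.fst).map (fun x => (x, π.condKernel x))

open MeasurableSpace ProbabilityTheory Set

/-!
The kernel graph `x ↦ (x, π_x)` is a measurable embedding of `X` into `X × P(Y)`: its graph is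
measurable because a finite measure is determined by its values on a countable generating
π-system. Hence couplings of `J(π) = μ ∘ (x ↦ (x, π_x))⁻¹` and `J(π')` are exactly the images of
couplings `χ ∈ Π(μ, μ')` under the product of the two embeddings, and the two transport problems
have the same set of costs.
-/

theorem MeasurableSpace.exists_countable_isPiSystem_generateFrom {α : Type*}
    [m : MeasurableSpace α] [CountablyGenerated α] :
    ∃ C : Set (Set α), C.Countable ∧ IsPiSystem C ∧ m = generateFrom C := by
  set s := natGeneratingSequence α
  refine ⟨piiUnionInter (fun n => {s n}) univ, ?_,
    isPiSystem_piiUnionInter _ (fun _ => .singleton _) univ, ?_⟩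
  · rw [piiUnionInter_singleton_left]
    exact (countable_range fun t : Finset ℕ => ⋂ i ∈ t, s i).mono
      (by rintro _ ⟨t, -, rfl⟩; exact ⟨t, rfl⟩)
  · rw [generateFrom_piiUnionInter_singleton_left]
    simp only [mem_univ, true_and]
    exact (generateFrom_natGeneratingSequence α).symm

namespace ProbabilityTheory.Kernel

variable {α β : Type*} [MeasurableSpace α] [MeasurableSpace β] [CountablyGenerated β]
  (κ : Kernel α β) [IsFiniteKernel κ]

theorem measurableSet_setOf_snd_eq_apply_fst :
    MeasurableSet {p : α × Measure β | p.2 = κ p.1} := by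
  obtain ⟨C, hC_count, hC_pi, hC_gen⟩ := exists_countable_isPiSystem_generateFrom (α := β)
  have h_eq_on : ∀ s, MeasurableSet s → MeasurableSet {p : α × Measure β | p.2 s = κ p.1 s} :=
    fun s hs => measurableSet_eq_fun ((Measure.measurable_coe hs).comp measurable_snd)
      ((κ.measurable_coe hs).comp measurable_fst)
  have h_graph : {p : α × Measure β | p.2 = κ p.1}
      = {p | p.2 univ = κ p.1 univ} ∩ ⋂ s ∈ C, {p | p.2 s = κ p.1 s} := by
    ext p
    simp only [mem_ofPred_eq, mem_inter_iff, mem_iInter]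
    refine ⟨fun h => ⟨h ▸ rfl, fun _ _ => h ▸ rfl⟩, fun ⟨h_univ, h_C⟩ => ?_⟩
    have : IsFiniteMeasure p.2 := ⟨h_univ ▸ measure_lt_top _ _⟩
    exact ext_of_generate_finite C hC_gen hC_pi h_C h_univ
  rw [h_graph]
  exact (h_eq_on _ .univ).inter <|
    .biInter hC_count fun s hs => h_eq_on s (hC_gen ▸ measurableSet_generateFrom hs)

theorem measurableEmbedding_prodMk_apply : MeasurableEmbedding fun a => (a, κ a) where
  injective _ _ h := congrArg Prod.fst h
  measurable := measurable_id.prodMk κ.measurable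
  measurableSet_image' s hs := by
    have h_image : (fun a => (a, κ a)) '' s = Prod.fst ⁻¹' s ∩ {p | p.2 = κ p.1} := by
      ext ⟨a, μ⟩
      constructor
      · rintro ⟨a, ha, h⟩
        cases h
        exact ⟨ha, rfl⟩
      · rintro ⟨ha, h⟩
        exact ⟨a, ha, Prod.ext rfl h.symm⟩
    rw [h_image]
    exact (measurable_fst hs).inter κ.measurableSet_setOf_snd_eq_apply_fst

end ProbabilityTheory.Kernel

namespace MeasureTheory.Measure

variable {α β γ δ : Type*} [MeasurableSpace α] [MeasurableSpace β] [MeasurableSpace γ]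
  [MeasurableSpace δ] {e : α → γ} {e' : β → δ}

theorem map_fst_map_prodMap (he : Measurable e) (he' : Measurable e') (χ : Measure (α × β)) :
    (χ.map (Prod.map e e')).map Prod.fst = (χ.map Prod.fst).map e := by
  rw [map_map measurable_fst (he.prodMap he'), map_map he measurable_fst]
  rfl

theorem map_snd_map_prodMap (he : Measurable e) (he' : Measurable e') (χ : Measure (α × β)) :
    (χ.map (Prod.map e e')).map Prod.snd = (χ.map Prod.snd).map e' := by
  rw [map_map measurable_snd (he.prodMap he'), map_map he' measurable_snd]
  rfl

end MeasureTheory.Measure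

namespace MeasurableEmbedding

variable {α β γ δ : Type*} [MeasurableSpace α] [MeasurableSpace β] [MeasurableSpace γ]
  [MeasurableSpace δ] {e : α → γ} {e' : β → δ} {μ : Measure α} {ν : Measure β}

theorem exists_map_prodMap_eq_of_map_fst_of_map_snd (he : MeasurableEmbedding e)
    (he' : MeasurableEmbedding e') {ρ : Measure (γ × δ)} (h_fst : ρ.map Prod.fst = μ.map e)
    (h_snd : ρ.map Prod.snd = ν.map e') :
    ∃ χ : Measure (α × β), χ.map Prod.fst = μ ∧ χ.map Prod.snd = ν ∧
      χ.map (Prod.map e e') = ρ := by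
  have h_range : ∀ᵐ z ∂ρ, z ∈ range (Prod.map e e') := by
    have h₁ : ∀ᵐ z ∂ρ, z.1 ∈ range e := ae_of_ae_map measurable_fst.aemeasurable <|
      h_fst ▸ ae_map_mem_range e he.measurableSet_range μ
    have h₂ : ∀ᵐ z ∂ρ, z.2 ∈ range e' := ae_of_ae_map measurable_snd.aemeasurable <|
      h_snd ▸ ae_map_mem_range e' he'.measurableSet_range ν
    filter_upwards [h₁, h₂] with z hz₁ hz₂
    exact range_prodMap ▸ ⟨hz₁, hz₂⟩
  have h_map : (ρ.comap (Prod.map e e')).map (Prod.map e e') = ρ := by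
    rw [(he.prodMap he').map_comap, Measure.restrict_eq_self_of_ae_mem h_range]
  refine ⟨ρ.comap (Prod.map e e'), ?_, ?_, h_map⟩
  · rw [← he.comap_map (Measure.map _ _),
      ← Measure.map_fst_map_prodMap he.measurable he'.measurable, h_map, h_fst, he.comap_map]
  · rw [← he'.comap_map (Measure.map _ _),
      ← Measure.map_snd_map_prodMap he.measurable he'.measurable, h_map, h_snd, he'.comap_map]

theorem setOf_integral_coupling_comp_prodMap (he : MeasurableEmbedding e)
    (he' : MeasurableEmbedding e') (c : γ × δ → ℝ) :
    {x | ∃ χ : Measure (α × β), χ.map Prod.fst = μ ∧ χ.map Prod.snd = ν ∧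
        x = ∫ q, c (Prod.map e e' q) ∂χ}
      = {x | ∃ ρ : Measure (γ × δ), ρ.map Prod.fst = μ.map e ∧ ρ.map Prod.snd = ν.map e' ∧
        x = ∫ q, c q ∂ρ} := by
  ext x
  constructor
  · rintro ⟨χ, h_fst, h_snd, rfl⟩
    exact ⟨χ.map (Prod.map e e'),
      h_fst ▸ Measure.map_fst_map_prodMap he.measurable he'.measurable χ,
      h_snd ▸ Measure.map_snd_map_prodMap he.measurable he'.measurable χ,
      ((he.prodMap he').integral_map c).symm⟩
  · rintro ⟨ρ, h_fst, h_snd, rfl⟩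
    obtain ⟨χ, hχ_fst, hχ_snd, rfl⟩ :=
      he.exists_map_prodMap_eq_of_map_fst_of_map_snd he' h_fst h_snd
    exact ⟨χ, hχ_fst, hχ_snd, (he.prodMap he').integral_map c⟩

end MeasurableEmbedding

theorem stmt17_general {X Y : Type*}
    [MetricSpace X] [MeasurableSpace X]
    [MetricSpace Y] [CompleteSpace Y] [SecondCountableTopology Y]
    [MeasurableSpace Y] [BorelSpace Y] [Nonempty Y]
    (r : ℝ) (π π' : Measure (X × Y)) [IsFiniteMeasure π] [IsFiniteMeasure π'] :
    (sInf {c : ℝ | ∃ χ : Measure (X × X),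
        χ.map Prod.fst = π.map Prod.fst ∧ χ.map Prod.snd = π'.map Prod.fst ∧
        c = ∫ q, (dist q.1 q.2 ^ r + WrRpow r (π.condKernel q.1) (π'.condKernel q.2)) ∂χ})
        ^ (1 / r)
      = (sInf {c : ℝ | ∃ ρ : Measure ((X × Measure Y) × (X × Measure Y)),
          ρ.map Prod.fst = Jembed π ∧ ρ.map Prod.snd = Jembed π' ∧
          c = ∫ q, (dist q.1.1 q.2.1 ^ r + WrRpow r q.1.2 q.2.2) ∂ρ}) ^ (1 / r) :=
  congrArg (sInf · ^ (1 / r)) <|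
    π.condKernel.measurableEmbedding_prodMk_apply.setOf_integral_coupling_comp_prodMap
      π'.condKernel.measurableEmbedding_prodMk_apply
      (fun q => dist q.1.1 q.2.1 ^ r + WrRpow r q.1.2 q.2.2)

/-- The adapted Wasserstein distance coincides with the Wasserstein distance between the
embedded measures: `AW_r(π, π') = W_r(J(π), J(π'))`, where `X × P_r(Y)` carries the metric
`((x,p),(x',p')) ↦ (d_X(x,x')^r + W_r^r(p,p'))^{1/r}`. -/
theorem stmt17 {X Y : Type*}
    [MetricSpace X] [CompleteSpace X] [SecondCountableTopology X]
    [MeasurableSpace X] [BorelSpace X]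
    [MetricSpace Y] [CompleteSpace Y] [SecondCountableTopology Y]
    [MeasurableSpace Y] [BorelSpace Y] [Nonempty Y]
    (r : ℝ) (hr : 1 ≤ r) (x₀ : X) (y₀ : Y) (m₀ : ℝ) (hm₀ : 0 < m₀)
    (π π' : Measure (X × Y)) [IsFiniteMeasure π] [IsFiniteMeasure π']
    (hmass : π Set.univ = ENNReal.ofReal m₀) (hmass' : π' Set.univ = ENNReal.ofReal m₀)
    (hmom : Integrable (fun q : X × Y => dist q.1 x₀ ^ r + dist q.2 y₀ ^ r) π)
    (hmom' : Integrable (fun q : X × Y => dist q.1 x₀ ^ r + dist q.2 y₀ ^ r) π') :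
    (sInf {c : ℝ | ∃ χ : Measure (X × X),
        χ.map Prod.fst = π.map Prod.fst ∧ χ.map Prod.snd = π'.map Prod.fst ∧
        c = ∫ q, (dist q.1 q.2 ^ r + WrRpow r (π.condKernel q.1) (π'.condKernel q.2)) ∂χ})
        ^ (1 / r)
      = (sInf {c : ℝ | ∃ ρ : Measure ((X × Measure Y) × (X × Measure Y)),
          ρ.map Prod.fst = Jembed π ∧ ρ.map Prod.snd = Jembed π' ∧
          c = ∫ q, (dist q.1.1 q.2.1 ^ r + WrRpow r q.1.2 q.2.2) ∂ρ}) ^ (1 / r) :=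
  stmt17_general r π π'
end
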